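/- arXiv:2010.02790 — 4 statements merged into one kernel-verified Lean document; each statement's English description precedes it below -/
import Mathlib

section
/- Let N ≥ 2 be an integer, R_N a real number with R_N < 0, 0 < β < π/(N−1), and let R : S(β,ρ₀) → ℂ be holomorphic with R(z) = z + R_N·z^N + O(|z|^{N+1}) as z → 0. Set λ := β·(N−1)/2. Then for every ν ∈ (0, (N−1)·|R_N|·cos λ) there exists ρ ∈ (0,ρ₀] such that R maps S(β,ρ) into itself and, for every j ∈ ℕ and every z ∈ S(β,ρ), |R^j(z)| ≤ |z| / (1 + j·ν·|z|^{N−1})^{1/(N−1)}, where R^j denotes the j-th iterate of R. -/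
/-!
Write `R z = z (1 + v)`, so that `v = R_N z^m + O(|z|^{m+1})` with `m = N - 1`. On the sector
`|m arg z| < λ < π/2`, so `Re (R_N z^m) ≤ R_N cos λ |z|^m`, and for small `|z|` this gives
`|1 + v| ≤ 1 - (ν/m) |z|^m`; by Bernoulli's inequality `|R z|^m (1 + ν |z|^m) ≤ |z|^m`, i.e.
`|R z|^{-m} ≥ |z|^{-m} + ν`, which iterates to the claimed bound. The sector is invariant because
`arg (R z) = arg z + arg (1 + v)` with `arg (1 + v)` small, and near the edges of the sector
`Im (R_N z^m)` has the sign opposite to `arg z`, so `R` turns points back towards the axis.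
-/

open Set Filter

/-- The open complex sector of opening `β` and radius `ρ`. -/
def sector (β ρ : ℝ) : Set ℂ :=
  {z : ℂ | z ≠ 0 ∧ |z.arg| < β / 2 ∧ ‖z‖ < ρ}

open Complex Real Topology

lemma one_sub_pow_mul_one_add_mul_le_one {s : ℝ} (m : ℕ) (h₁ : -1 ≤ s) (h₂ : s ≤ 1) :
    (1 - s) ^ m * (1 + m * s) ≤ 1 :=
  calc (1 - s) ^ m * (1 + m * s) ≤ (1 - s) ^ m * (1 + s) ^ m :=
        mul_le_mul_of_nonneg_left (one_add_mul_le_pow (by linarith) m) (by bound)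
    _ = (1 - s ^ 2) ^ m := by rw [← mul_pow]; ring
    _ ≤ 1 := pow_le_one₀ (by nlinarith) (by nlinarith)

lemma pow_mul_one_add_mul_le {x y s : ℝ} (m : ℕ) (hx : 0 ≤ x) (hy : 0 ≤ y) (hs₀ : 0 ≤ s)
    (hs₁ : s ≤ 1) (hxy : x ≤ y * (1 - s)) : x ^ m * (1 + m * s) ≤ y ^ m :=
  calc x ^ m * (1 + m * s) ≤ (y * (1 - s)) ^ m * (1 + m * s) := by gcongr
    _ = y ^ m * ((1 - s) ^ m * (1 + m * s)) := by rw [mul_pow]; ring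
    _ ≤ y ^ m := mul_le_of_le_one_right (by positivity)
        (one_sub_pow_mul_one_add_mul_le_one m (by linarith) hs₁)

lemma le_div_rpow_inv_of_pow_mul_le {x y D : ℝ} {m : ℕ} (hm : m ≠ 0) (hx : 0 ≤ x) (hy : 0 ≤ y)
    (hD : 0 < D) (h : x ^ m * D ≤ y ^ m) : x ≤ y / D ^ (m : ℝ)⁻¹ := by
  rw [le_div_iff₀ (by positivity)]
  calc x * D ^ (m : ℝ)⁻¹ = (x ^ m * D) ^ (m : ℝ)⁻¹ := by
        rw [mul_rpow (by positivity) hD.le, pow_rpow_inv_natCast hx hm]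
    _ ≤ (y ^ m) ^ (m : ℝ)⁻¹ := by gcongr
    _ = y := pow_rpow_inv_natCast hy hm

theorem iterate_mul_one_add_le {α : Type*} {f : α → α} {s : Set α} {φ : α → ℝ} {ν : ℝ}
    (hf : MapsTo f s s) (hν : 0 ≤ ν) (hφ : ∀ x ∈ s, 0 ≤ φ x)
    (hstep : ∀ x ∈ s, φ (f x) * (1 + ν * φ x) ≤ φ x) (j : ℕ) {x : α} (hx : x ∈ s) :
    φ (f^[j] x) * (1 + j * ν * φ x) ≤ φ x := by
  induction j with
  | zero => simp
  | succ n ih =>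
    have hn := hf.iterate n hx
    have h1 := hstep _ hn
    have hr := hφ _ (hf hn)
    have hs := hφ _ hn
    have hT := hφ _ hx
    rw [Function.iterate_succ_apply']
    push_cast
    nlinarith [mul_nonneg (sub_nonneg.2 h1) (by positivity : 0 ≤ 1 + (n + 1) * ν * φ x),
      sub_nonneg.2 ih, mul_nonneg hν hs, mul_nonneg (mul_nonneg hν hs) hr]

lemma norm_one_add_le (u : ℂ) : ‖1 + u‖ ≤ 1 + u.re + ‖u‖ ^ 2 / 2 := by
  have hre : -‖u‖ ≤ u.re := (abs_le.1 (abs_re_le_norm u)).1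
  have hsq : ‖u‖ ^ 2 = u.re ^ 2 + u.im ^ 2 := by
    rw [Complex.sq_norm, normSq_apply]; ring
  have hsq' : ‖1 + u‖ ^ 2 = (1 + u.re) ^ 2 + u.im ^ 2 := by
    rw [Complex.sq_norm, normSq_apply]; simp only [add_re, one_re, add_im, one_im]; ring
  refine (pow_le_pow_iff_left₀ (norm_nonneg _) ?_ two_ne_zero).1 ?_
  · nlinarith [sq_nonneg (1 - ‖u‖)]
  · nlinarith [sq_nonneg (u.re + ‖u‖ ^ 2 / 2)]

lemma norm_one_add_le_one_sub {u v : ℂ} {t c a a' η : ℝ} (ht : 0 ≤ t) (hu : ‖u‖ ≤ c * t)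
    (hre : u.re ≤ -(a * t)) (hvu : ‖v - u‖ ≤ η * t) (h : c ^ 2 / 2 * t + η ≤ a - a') :
    ‖1 + v‖ ≤ 1 - a' * t := by
  have hu2 : ‖u‖ ^ 2 ≤ (c * t) ^ 2 := pow_le_pow_left₀ (norm_nonneg u) hu 2
  calc ‖1 + v‖ = ‖(1 + u) + (v - u)‖ := by ring_nf
    _ ≤ ‖1 + u‖ + ‖v - u‖ := norm_add_le _ _
    _ ≤ 1 + u.re + ‖u‖ ^ 2 / 2 + η * t := add_le_add (norm_one_add_le u) hvu
    _ ≤ 1 - a' * t := by nlinarith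

lemma abs_arg_le_pi_div_two_mul {w : ℂ} (hw : 0 ≤ w.re) : |w.arg| ≤ π / 2 * (|w.im| / ‖w‖) := by
  have harg := abs_arg_le_pi_div_two_iff.2 hw
  have h := Real.mul_le_sin (abs_nonneg w.arg) harg
  rw [← abs_sin_eq_sin_abs_of_abs_le_pi (harg.trans (by linarith [pi_pos])), sin_arg, abs_div,
    abs_norm] at h
  rw [← div_le_iff₀' (by positivity), div_eq_inv_mul, inv_div]
  exact h

lemma one_sub_norm_le_re_one_add (v : ℂ) : 1 - ‖v‖ ≤ (1 + v).re := by
  have := (abs_le.1 (abs_re_le_norm v)).1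
  simp only [add_re, one_re]
  linarith

lemma abs_arg_one_add_le {v : ℂ} (hv : ‖v‖ ≤ 1 / 2) : |(1 + v).arg| ≤ π * ‖v‖ := by
  have hre := one_sub_norm_le_re_one_add v
  have hnorm : 1 / 2 ≤ ‖1 + v‖ := by linarith [re_le_norm (1 + v)]
  have him : |(1 + v).im| ≤ ‖v‖ := by simpa using abs_im_le_norm v
  calc |(1 + v).arg| ≤ π / 2 * (|(1 + v).im| / ‖1 + v‖) :=
        abs_arg_le_pi_div_two_mul (by linarith)
    _ ≤ π / 2 * (‖v‖ / (1 / 2)) := by gcongr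
    _ = π * ‖v‖ := by ring

lemma norm_div_sub_one_sub_mul_pow_le {m : ℕ} {a : ℂ} {η : ℝ} {z w : ℂ} (hz : z ≠ 0)
    (hw : ‖w - z - a * z ^ (m + 1)‖ ≤ η * ‖z‖ ^ (m + 1)) :
    ‖w / z - 1 - a * z ^ m‖ ≤ η * ‖z‖ ^ m := by
  have hdiv : w / z - 1 - a * z ^ m = (w - z - a * z ^ (m + 1)) / z := by field_simp; ring
  rw [hdiv, norm_div, div_le_iff₀ (norm_pos_iff.2 hz)]
  simpa only [pow_succ, mul_assoc] using hw

lemma arg_nonpos_of_im_nonpos {w : ℂ} (hre : 0 ≤ w.re) (him : w.im ≤ 0) : w.arg ≤ 0 := by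
  rcases him.lt_or_eq with h | h
  · exact (arg_neg_iff.2 h).le
  · exact (arg_eq_zero_iff.2 ⟨hre, h⟩).le

lemma pow_eq_norm_pow_mul_exp (z : ℂ) (m : ℕ) :
    z ^ m = (‖z‖ ^ m : ℝ) * exp ((m * z.arg : ℝ) * I) := by
  conv_lhs => rw [← norm_mul_exp_arg_mul_I z]
  rw [mul_pow, ← Complex.exp_nat_mul]; push_cast; ring_nf

lemma re_pow_eq_norm_pow_mul_cos (z : ℂ) (m : ℕ) :
    (z ^ m).re = ‖z‖ ^ m * Real.cos (m * z.arg) := by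
  rw [pow_eq_norm_pow_mul_exp, re_ofReal_mul, exp_ofReal_mul_I_re]

lemma im_pow_eq_norm_pow_mul_sin (z : ℂ) (m : ℕ) :
    (z ^ m).im = ‖z‖ ^ m * Real.sin (m * z.arg) := by
  rw [pow_eq_norm_pow_mul_exp, im_ofReal_mul, exp_ofReal_mul_I_im]

section

variable {m : ℕ} {RN β : ℝ} {z : ℂ}

lemma re_mul_pow_le (hRN : RN ≤ 0) (hβm : β * m / 2 ≤ π)
    (hz : |z.arg| ≤ β / 2) : (RN * z ^ m).re ≤ RN * Real.cos (β * m / 2) * ‖z‖ ^ m := by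
  have hmθ : |m * z.arg| ≤ β * m / 2 := by
    rw [abs_mul, Nat.abs_cast]; nlinarith [(Nat.cast_nonneg m : (0:ℝ) ≤ m)]
  have hcos : Real.cos (β * m / 2) ≤ Real.cos (m * z.arg) := by
    rw [← Real.cos_abs (m * z.arg)]
    exact Real.cos_le_cos_of_nonneg_of_le_pi (abs_nonneg _) hβm hmθ
  rw [re_ofReal_mul, re_pow_eq_norm_pow_mul_cos]
  nlinarith [mul_le_mul_of_nonpos_left hcos hRN, pow_nonneg (norm_nonneg z) m]

lemma im_mul_pow_le (hRN : RN ≤ 0) (hβ : 0 ≤ β) (hβm : β * m / 2 ≤ π / 2)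
    (h₁ : β / 4 ≤ z.arg) (h₂ : z.arg ≤ β / 2) :
    (RN * z ^ m).im ≤ RN * Real.sin (β * m / 4) * ‖z‖ ^ m := by
  have hm : (0:ℝ) ≤ m := Nat.cast_nonneg m
  have hsin : Real.sin (β * m / 4) ≤ Real.sin (m * z.arg) :=
    Real.sin_le_sin_of_le_of_le_pi_div_two (by nlinarith [pi_pos]) (by nlinarith) (by nlinarith)
  rw [im_ofReal_mul, im_pow_eq_norm_pow_mul_sin]
  nlinarith [mul_le_mul_of_nonpos_left hsin hRN, pow_nonneg (norm_nonneg z) m]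

lemma le_im_mul_pow (hRN : RN ≤ 0) (hβ : 0 ≤ β) (hβm : β * m / 2 ≤ π / 2)
    (h₁ : -(β / 2) ≤ z.arg) (h₂ : z.arg ≤ -(β / 4)) :
    -(RN * Real.sin (β * m / 4) * ‖z‖ ^ m) ≤ (RN * z ^ m).im := by
  have hm : (0:ℝ) ≤ m := Nat.cast_nonneg m
  have hsin : Real.sin (m * z.arg) ≤ Real.sin (-(β * m / 4)) :=
    Real.sin_le_sin_of_le_of_le_pi_div_two (by nlinarith) (by nlinarith [pi_pos]) (by nlinarith)
  rw [Real.sin_neg] at hsin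
  rw [im_ofReal_mul, im_pow_eq_norm_pow_mul_sin]
  nlinarith [mul_le_mul_of_nonpos_left hsin hRN, pow_nonneg (norm_nonneg z) m]

end

lemma mul_mem_sector {β ρ : ℝ} {z w : ℂ} (hβ : β ≤ π) (hz0 : z ≠ 0) (hz : |z.arg| < β / 2)
    (hw : 0 < w.re) (hw_arg : |w.arg| < β / 4) (hpos : β / 4 < z.arg → w.im ≤ 0)
    (hneg : z.arg < -(β / 4) → 0 ≤ w.im) (hρ : ‖z * w‖ < ρ) : z * w ∈ sector β ρ := by
  have hw0 : w ≠ 0 := fun h => by simp [h] at hw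
  have hz' := abs_lt.1 hz
  have hw' := abs_lt.1 hw_arg
  refine ⟨mul_ne_zero hz0 hw0, ?_, hρ⟩
  rw [arg_mul hz0 hw0 ⟨by linarith, by linarith⟩, abs_lt]
  rcases lt_or_ge (β / 4) z.arg with h | h
  · have := arg_nonpos_of_im_nonpos hw.le (hpos h)
    constructor <;> linarith
  rcases lt_or_ge z.arg (-(β / 4)) with h' | h'
  · have := arg_nonneg_iff.2 (hneg h')
    constructor <;> linarith
  · constructor <;> linarith

theorem mem_sector_and_norm_pow_mul_le {m : ℕ} {RN β ρ η ν : ℝ} (hm : 1 ≤ m) (hRN : RN < 0)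
    (hβ : 0 < β) (hβm : β * m / 2 < π / 2) (hρ1 : ρ ≤ 1) (hν : 0 ≤ ν)
    (h_re : RN ^ 2 / 2 * ρ + η ≤ -RN * Real.cos (β * m / 2) - ν / m)
    (h_im : η ≤ -RN * Real.sin (β * m / 4)) (h_arg : π * ((-RN + η) * ρ) < β / 4)
    {z w : ℂ} (hz : z ∈ sector β ρ) (hw : ‖w - z - RN * z ^ (m + 1)‖ ≤ η * ‖z‖ ^ (m + 1)) :
    w ∈ sector β ρ ∧ ‖w‖ ^ m * (1 + ν * ‖z‖ ^ m) ≤ ‖z‖ ^ m := by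
  obtain ⟨hz0, hz_arg, hzρ⟩ := hz
  have hz_pos : 0 < ‖z‖ := norm_pos_iff.2 hz0
  have hm0 : (0:ℝ) < m := by exact_mod_cast hm
  have hβπ : β < π := by nlinarith [(Nat.one_le_cast.2 hm : (1:ℝ) ≤ m)]
  set t := ‖z‖ ^ m
  have ht0 : 0 < t := by positivity
  have htρ : t ≤ ρ := (pow_le_of_le_one hz_pos.le (hzρ.le.trans hρ1) (by omega)).trans hzρ.le
  set u : ℂ := RN * z ^ m
  set v : ℂ := w / z - 1
  have hw_eq : w = z * (1 + v) := by simp only [v]; field_simp; ring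
  have hvu : ‖v - u‖ ≤ η * t := norm_div_sub_one_sub_mul_pow_le hz0 hw
  have hη : 0 ≤ η := nonneg_of_mul_nonneg_left ((norm_nonneg _).trans hvu) ht0
  have hu : ‖u‖ = -RN * t := by simp [u, abs_of_neg hRN, t]
  have hv : ‖v‖ ≤ (-RN + η) * ρ :=
    calc ‖v‖ ≤ ‖u‖ + ‖v - u‖ := norm_le_insert' v u
      _ ≤ (-RN + η) * t := by rw [hu]; linarith
      _ ≤ (-RN + η) * ρ := by gcongr; linarith
  have h1v : ‖1 + v‖ ≤ 1 - ν / m * t := by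
    refine norm_one_add_le_one_sub ht0.le hu.le (a := -RN * Real.cos (β * m / 2)) ?_ hvu ?_
    · linarith [re_mul_pow_le (m := m) hRN.le (by linarith) hz_arg.le (z := z)]
    · nlinarith
  have hv_half : ‖v‖ ≤ 1 / 2 := by nlinarith [pi_pos]
  have h1v_re : 0 < (1 + v).re := by linarith [one_sub_norm_le_re_one_add v]
  have h1v_arg : |(1 + v).arg| < β / 4 := by nlinarith [abs_arg_one_add_le hv_half, pi_pos]
  have him : (1 + v).im = u.im + (v - u).im := by simp
  have hvu_im := abs_le.1 ((abs_im_le_norm (v - u)).trans hvu)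
  have hz_arg' := abs_lt.1 hz_arg
  have hs₀ : 0 ≤ ν / m * t := by positivity
  have hs₁ : ν / m * t ≤ 1 := by linarith [norm_nonneg (1 + v)]
  have hw_norm : ‖z * (1 + v)‖ ≤ ‖z‖ * (1 - ν / m * t) := by
    rw [norm_mul]; exact mul_le_mul_of_nonneg_left h1v hz_pos.le
  refine ⟨hw_eq ▸ mul_mem_sector hβπ.le hz0 hz_arg h1v_re h1v_arg ?_ ?_ ?_, ?_⟩
  · intro h
    nlinarith [im_mul_pow_le (m := m) hRN.le hβ.le hβm.le h.le hz_arg'.2.le]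
  · intro h
    nlinarith [le_im_mul_pow (m := m) hRN.le hβ.le hβm.le hz_arg'.1.le h.le]
  · nlinarith [mul_nonneg hz_pos.le hs₀]
  · have key := pow_mul_one_add_mul_le m (norm_nonneg _) hz_pos.le hs₀ hs₁ hw_norm
    rwa [← mul_assoc, mul_div_cancel₀ _ hm0.ne', ← hw_eq] at key

theorem stmt_12_general
    (N : ℕ) (hN : 2 ≤ N) (RN : ℝ) (hRN : RN < 0)
    (β ρ₀ : ℝ) (hβ0 : 0 < β) (hβ : β < Real.pi / ((N:ℝ) - 1)) (hρ₀ : 0 < ρ₀)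
    (R : ℂ → ℂ)
    (hRexp : ∃ C > (0:ℝ), ∃ δ > (0:ℝ), ∀ z ∈ sector β ρ₀, ‖z‖ < δ →
      ‖R z - z - (RN : ℂ) * z ^ N‖ ≤ C * ‖z‖ ^ (N + 1)) :
    ∀ ν : ℝ, 0 < ν → ν < ((N:ℝ) - 1) * |RN| * Real.cos (β * ((N:ℝ) - 1) / 2) →
      ∃ ρ : ℝ, 0 < ρ ∧ ρ ≤ ρ₀ ∧
        MapsTo R (sector β ρ) (sector β ρ) ∧
        ∀ j : ℕ, ∀ z ∈ sector β ρ,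
          ‖R^[j] z‖ ≤ ‖z‖ / (1 + (j:ℝ) * ν * ‖z‖ ^ (N - 1)) ^ ((1:ℝ) / ((N:ℝ) - 1)) := by
  intro ν hν hν_lt
  obtain ⟨C, hC, δ, hδ, hest⟩ := hRexp
  obtain ⟨m, rfl⟩ : ∃ m, N = m + 1 := ⟨N - 1, by omega⟩
  have hm : 1 ≤ m := by omega
  have hm0 : (0:ℝ) < m := by exact_mod_cast hm
  push_cast at hβ hν_lt ⊢
  simp only [add_sub_cancel_right, abs_of_neg hRN] at hβ hν_lt ⊢
  have hβm : β * m / 2 < π / 2 := by rw [lt_div_iff₀ hm0] at hβ; linarith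
  have h_cos : 0 < -RN * Real.cos (β * m / 2) - ν / m := by
    rw [sub_pos, div_lt_iff₀ hm0]; linarith
  have h_sin : 0 < -RN * Real.sin (β * m / 4) :=
    mul_pos (by linarith) (Real.sin_pos_of_pos_of_lt_pi (by positivity) (by linarith [pi_pos]))
  have hsmall : ∀ᶠ ρ in 𝓝 (0:ℝ), ρ < ρ₀ ∧ ρ < δ ∧ ρ < 1 ∧
      RN ^ 2 / 2 * ρ + C * ρ < -RN * Real.cos (β * m / 2) - ν / m ∧
      C * ρ < -RN * Real.sin (β * m / 4) ∧ π * ((-RN + C * ρ) * ρ) < β / 4 := by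
    refine (eventually_lt_nhds hρ₀).and <| (eventually_lt_nhds hδ).and <|
      (eventually_lt_nhds one_pos).and <|
      (ContinuousAt.eventually_lt (by fun_prop) continuousAt_const (by simpa using h_cos)).and <|
      (ContinuousAt.eventually_lt (by fun_prop) continuousAt_const (by simpa using h_sin)).and <|
      ContinuousAt.eventually_lt (by fun_prop) continuousAt_const (by simp; positivity)
  obtain ⟨ρ, ⟨hρρ₀, hρδ, hρ1, h_re, h_im, h_arg⟩, hρ0⟩ :=
    ((hsmall.filter_mono nhdsWithin_le_nhds).and (self_mem_nhdsWithin (s := Ioi 0))).exists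
  have hstep (z : ℂ) (hz : z ∈ sector β ρ) :
      R z ∈ sector β ρ ∧ ‖R z‖ ^ m * (1 + ν * ‖z‖ ^ m) ≤ ‖z‖ ^ m := by
    refine mem_sector_and_norm_pow_mul_le hm hRN hβ0 hβm hρ1.le hν.le h_re.le h_im.le h_arg hz
      ?_
    calc ‖R z - z - RN * z ^ (m + 1)‖ ≤ C * ‖z‖ ^ (m + 1 + 1) :=
          hest z ⟨hz.1, hz.2.1, hz.2.2.trans hρρ₀⟩ (hz.2.2.trans hρδ)
      _ ≤ C * ρ * ‖z‖ ^ (m + 1) := by rw [pow_succ', ← mul_assoc]; gcongr; exact hz.2.2.le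
  refine ⟨ρ, hρ0, hρρ₀.le, fun z hz => (hstep z hz).1, fun j z hz => ?_⟩
  have hdecay := iterate_mul_one_add_le (φ := fun z => ‖z‖ ^ m) (fun z hz => (hstep z hz).1)
    hν.le (fun z _ => by positivity) (fun z hz => (hstep z hz).2) j hz
  rw [one_div]
  exact le_div_rpow_inv_of_pow_mul_le (by omega) (norm_nonneg _) (norm_nonneg _) (by positivity)
    hdecay

/-- Lemma 4.1: contraction estimates for the iterates of a holomorphic map
`R(z) = z + R_N z^N + O(|z|^{N+1})`, `R_N < 0`, on a complex sector. -/
theorem stmt_12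
    (N : ℕ) (hN : 2 ≤ N) (RN : ℝ) (hRN : RN < 0)
    (β ρ₀ : ℝ) (hβ0 : 0 < β) (hβ : β < Real.pi / ((N:ℝ) - 1)) (hρ₀ : 0 < ρ₀)
    (R : ℂ → ℂ) (hR : DifferentiableOn ℂ R (sector β ρ₀))
    (hRexp : ∃ C > (0:ℝ), ∃ δ > (0:ℝ), ∀ z ∈ sector β ρ₀, ‖z‖ < δ →
      ‖R z - z - (RN : ℂ) * z ^ N‖ ≤ C * ‖z‖ ^ (N + 1)) :
    ∀ ν : ℝ, 0 < ν → ν < ((N:ℝ) - 1) * |RN| * Real.cos (β * ((N:ℝ) - 1) / 2) →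
      ∃ ρ : ℝ, 0 < ρ ∧ ρ ≤ ρ₀ ∧
        MapsTo R (sector β ρ) (sector β ρ) ∧
        ∀ j : ℕ, ∀ z ∈ sector β ρ,
          ‖R^[j] z‖ ≤ ‖z‖ / (1 + (j:ℝ) * ν * ‖z‖ ^ (N - 1)) ^ ((1:ℝ) / ((N:ℝ) - 1)) :=
  stmt_12_general N hN RN hRN β ρ₀ hβ0 hβ hρ₀ R hRexp
end

section
/- Let N ≥ 2 be an integer and let R : [0,ρ₀) → ℝ be a differentiable map with R(t) = t + R_N·t^N + O(t^{N+1}) and R_N < 0. Then for any real numbers ν, μ with 0 < ν < (N−1)·|R_N| < μ there exists ρ ∈ (0,ρ₀] such that for every integer j ≥ 1 and every t ∈ (0,ρ): t/(1 + j·μ·t^{N−1})^{1/(N−1)} < R^j(t) < t/(1 + j·ν·t^{N−1})^{1/(N−1)}. In particular, R maps (0,ρ) into itself. -/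
/-!
With `m = N - 1`, the change of variable `t ↦ 1 / t ^ m` turns `R` into an approximate translation:
`1 / R(s)^m - 1 / s^m → m·|R_N|` as `s → 0⁺`. On a small interval `(0, ρ)` every step of the
iteration therefore increases `1 / t^m` by an amount in `(ν, μ)`, so `R` decreases and the increments
telescope to `j·ν < 1 / (R^j t)^m - 1 / t^m < j·μ`; undoing the change of variable gives both bounds.
-/

open Set Filter Topology

lemma one_div_pow_lt_one_div_pow_iff {m : ℕ} (hm : m ≠ 0) {a b : ℝ} (ha : 0 < a) (hb : 0 < b) :
    1 / a ^ m < 1 / b ^ m ↔ b < a :=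
  (one_div_lt_one_div (pow_pos ha m) (pow_pos hb m)).trans (pow_lt_pow_iff_left₀ hb.le ha.le hm)

lemma one_div_pow_div_rpow {m : ℕ} (hm : m ≠ 0) {t c : ℝ} (ht : t ≠ 0) (hc : 0 < 1 + c * t ^ m) :
    1 / (t / (1 + c * t ^ m) ^ ((1 : ℝ) / m)) ^ m = 1 / t ^ m + c := by
  rw [div_pow, one_div (m : ℝ), Real.rpow_inv_natCast_pow hc.le hm]
  field_simp

lemma one_div_mul_pow_sub_one_div_pow (m : ℕ) {s q : ℝ} (hs : s ≠ 0) (hq : q ≠ 0) :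
    1 / (s * q) ^ m - 1 / s ^ m = -((q - 1) / s ^ m * (∑ i ∈ Finset.range m, q ^ i) / q ^ m) := by
  rw [show (q - 1) / s ^ m * (∑ i ∈ Finset.range m, q ^ i) / q ^ m
      = (∑ i ∈ Finset.range m, q ^ i) * (q - 1) / (s * q) ^ m by rw [mul_pow]; ring,
    geom_sum_mul]
  field_simp
  ring

section Asymptotics

variable {q : ℝ → ℝ} {m : ℕ} {a : ℝ}

lemma tendsto_sub_one_div_pow_of_abs_sub_le {R : ℝ → ℝ} {C δ : ℝ} (hδ : 0 < δ)
    (hR : ∀ t : ℝ, 0 ≤ t → t < δ → |R t - (t + a * t ^ (m + 1))| ≤ C * t ^ (m + 1 + 1)) :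
    Tendsto (fun s => (R s / s - 1) / s ^ m) (𝓝[>] 0) (𝓝 a) := by
  have hCs : Tendsto (fun s : ℝ => C * s) (𝓝[>] 0) (𝓝 0) := by
    simpa using (tendsto_id.const_mul C).mono_left (nhdsWithin_le_nhds (a := (0 : ℝ)))
  refine tendsto_iff_norm_sub_tendsto_zero.mpr (squeeze_zero_norm' ?_ hCs)
  filter_upwards [Ioo_mem_nhdsGT hδ] with s ⟨hs, hsδ⟩
  have hsm : 0 < s ^ (m + 1) := pow_pos hs _
  have hdiff : (R s / s - 1) / s ^ m - a = (R s - (s + a * s ^ (m + 1))) / s ^ (m + 1) := by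
    field_simp
    ring
  rw [norm_norm, Real.norm_eq_abs, hdiff, abs_div, abs_of_pos hsm, div_le_iff₀ hsm]
  calc |R s - (s + a * s ^ (m + 1))| ≤ C * s ^ (m + 1 + 1) := hR s hs.le hsδ
    _ = C * s * s ^ (m + 1) := by ring

lemma tendsto_one_of_tendsto_sub_one_div_pow (hm : m ≠ 0)
    (hq : Tendsto (fun s => (q s - 1) / s ^ m) (𝓝[>] 0) (𝓝 a)) :
    Tendsto q (𝓝[>] 0) (𝓝 1) := by
  have hpow : Tendsto (fun s : ℝ => s ^ m) (𝓝[>] 0) (𝓝 0) := by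
    simpa [zero_pow hm] using
      ((continuous_pow m).tendsto (0 : ℝ)).mono_left nhdsWithin_le_nhds
  have hlim := tendsto_const_nhds (x := (1 : ℝ)).add (hq.mul hpow)
  rw [mul_zero, add_zero] at hlim
  refine hlim.congr' ?_
  filter_upwards [self_mem_nhdsWithin] with s (hs : 0 < s)
  field_simp
  ring

lemma tendsto_one_div_mul_pow_sub_one_div_pow (hm : m ≠ 0)
    (hq : Tendsto (fun s => (q s - 1) / s ^ m) (𝓝[>] 0) (𝓝 a)) :
    Tendsto (fun s => 1 / (s * q s) ^ m - 1 / s ^ m) (𝓝[>] 0) (𝓝 (-(m * a))) := by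
  have hq1 := tendsto_one_of_tendsto_sub_one_div_pow hm hq
  have hsum : Tendsto (fun s => ∑ i ∈ Finset.range m, q s ^ i) (𝓝[>] 0) (𝓝 m) := by
    simpa using tendsto_finsetSum (Finset.range m) fun i _ => hq1.pow i
  have hlim := ((hq.mul hsum).div (by simpa using hq1.pow m) one_ne_zero).neg
  rw [div_one, mul_comm a] at hlim
  refine hlim.congr' ?_
  filter_upwards [hq1.eventually (eventually_ne_nhds one_ne_zero), self_mem_nhdsWithin]
    with s hqs (hs : 0 < s)
  exact (one_div_mul_pow_sub_one_div_pow m hs.ne' hqs).symm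

end Asymptotics

lemma eventually_pos_and_one_div_pow_sub_mem_Ioo {R : ℝ → ℝ} {m : ℕ} (hm : m ≠ 0) {a C δ ν μ : ℝ}
    (hδ : 0 < δ)
    (hR : ∀ t : ℝ, 0 ≤ t → t < δ → |R t - (t + a * t ^ (m + 1))| ≤ C * t ^ (m + 1 + 1))
    (hν : ν < -(m * a)) (hμ : -(m * a) < μ) :
    ∀ᶠ s in 𝓝[>] 0, 0 < R s ∧ 1 / R s ^ m - 1 / s ^ m ∈ Ioo ν μ := by
  have hq := tendsto_sub_one_div_pow_of_abs_sub_le hδ hR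
  filter_upwards [(tendsto_one_of_tendsto_sub_one_div_pow hm hq).eventually
      (eventually_gt_nhds one_pos),
    (tendsto_one_div_mul_pow_sub_one_div_pow hm hq).eventually (Ioo_mem_nhds hν hμ),
    self_mem_nhdsWithin] with s hqs hstep (hs : 0 < s)
  rw [mul_div_cancel₀ _ hs.ne'] at hstep
  exact ⟨by simpa [div_pos_iff_of_pos_right hs] using hqs, hstep⟩

lemma mapsTo_Ioo_of_one_div_pow_lt {R : ℝ → ℝ} {m : ℕ} (hm : m ≠ 0) {ρ : ℝ}
    (h : ∀ s ∈ Ioo 0 ρ, 0 < R s ∧ 1 / s ^ m < 1 / R s ^ m) :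
    MapsTo R (Ioo 0 ρ) (Ioo 0 ρ) := fun s hs =>
  have ⟨hRs, hlt⟩ := h s hs
  ⟨hRs, ((one_div_pow_lt_one_div_pow_iff hm hs.1 hRs).mp hlt).trans hs.2⟩

lemma mul_lt_sub_iterate_lt_mul {α : Type*} {R : α → α} {S : Set α} (f : α → ℝ) {ν μ : ℝ}
    (hS : MapsTo R S S) (hstep : ∀ s ∈ S, f (R s) - f s ∈ Ioo ν μ)
    {j : ℕ} (hj : 1 ≤ j) {t : α} (ht : t ∈ S) :
    j * ν < f (R^[j] t) - f t ∧ f (R^[j] t) - f t < j * μ := by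
  induction j, hj using Nat.le_induction with
  | base => simpa using hstep t ht
  | succ j _ ih =>
    have ⟨hl, hu⟩ := hstep _ (hS.iterate j ht)
    rw [Function.iterate_succ_apply']
    push_cast
    constructor <;> linarith [ih.1, ih.2]

theorem stmt_14_general
    (N : ℕ) (hN : 2 ≤ N) (ρ₀ : ℝ) (hρ₀ : 0 < ρ₀)
    (R : ℝ → ℝ)
    (RN : ℝ) (hRN : RN < 0)
    (hRexp : ∃ C > (0:ℝ), ∃ δ > (0:ℝ), ∀ t : ℝ, 0 ≤ t → t < δ →
      |R t - (t + RN * t ^ N)| ≤ C * t ^ (N + 1)) :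
    ∀ ν μ : ℝ, 0 < ν → ν < ((N:ℝ) - 1) * |RN| → ((N:ℝ) - 1) * |RN| < μ →
      ∃ ρ : ℝ, 0 < ρ ∧ ρ ≤ ρ₀ ∧
        (∀ j : ℕ, 1 ≤ j → ∀ t ∈ Ioo (0:ℝ) ρ,
          t / (1 + (j:ℝ) * μ * t ^ (N - 1)) ^ ((1:ℝ) / ((N:ℝ) - 1)) < R^[j] t ∧
          R^[j] t < t / (1 + (j:ℝ) * ν * t ^ (N - 1)) ^ ((1:ℝ) / ((N:ℝ) - 1))) ∧
        MapsTo R (Ioo 0 ρ) (Ioo 0 ρ) := by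
  intro ν μ hν hνlt hμlt
  obtain ⟨m, rfl⟩ : ∃ m, N = m + 1 := ⟨N - 1, by omega⟩
  have hm : m ≠ 0 := by omega
  obtain ⟨C, -, δ, hδ, hbound⟩ := hRexp
  simp only [Nat.add_sub_cancel, Nat.cast_add, Nat.cast_one, add_sub_cancel_right,
    abs_of_neg hRN, mul_neg] at hνlt hμlt ⊢
  obtain ⟨ε, hε, hsub⟩ := mem_nhdsGT_iff_exists_Ioo_subset.mp
    (eventually_pos_and_one_div_pow_sub_mem_Ioo hm hδ hbound hνlt hμlt)
  have hstep : ∀ s ∈ Ioo 0 (min ε ρ₀), 0 < R s ∧ 1 / R s ^ m - 1 / s ^ m ∈ Ioo ν μ :=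
    fun s hs => hsub (Ioo_subset_Ioo_right (min_le_left _ _) hs)
  have hmaps : MapsTo R (Ioo 0 (min ε ρ₀)) (Ioo 0 (min ε ρ₀)) :=
    mapsTo_Ioo_of_one_div_pow_lt hm fun s hs => by
      have ⟨hRs, hlt, _⟩ := hstep s hs
      exact ⟨hRs, by linarith⟩
  refine ⟨min ε ρ₀, lt_min hε hρ₀, min_le_right _ _, fun j hj t ht => ?_, hmaps⟩
  have ⟨hl, hu⟩ := mul_lt_sub_iterate_lt_mul (fun x => 1 / x ^ m) hmaps
    (fun s hs => (hstep s hs).2) hj ht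
  have hr := (hmaps.iterate j ht).1
  have ht0 : 0 < t := ht.1
  have hμ : 0 < μ := hν.trans (hνlt.trans hμlt)
  constructor
  · rw [← one_div_pow_lt_one_div_pow_iff hm hr (div_pos ht0 (by positivity)),
      one_div_pow_div_rpow hm ht0.ne' (by positivity)]
    linarith
  · rw [← one_div_pow_lt_one_div_pow_iff hm (div_pos ht0 (by positivity)) hr,
      one_div_pow_div_rpow hm ht0.ne' (by positivity)]
    linarith

/-- Lemma 5.1: two-sided estimates for the iterates of a real map
`R(t) = t + R_N t^N + O(t^{N+1})` with `R_N < 0` on a small interval `(0,ρ)`. -/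
theorem stmt_14
    (N : ℕ) (hN : 2 ≤ N) (ρ₀ : ℝ) (hρ₀ : 0 < ρ₀)
    (R : ℝ → ℝ) (hdiff : DifferentiableOn ℝ R (Ico 0 ρ₀))
    (RN : ℝ) (hRN : RN < 0)
    (hRexp : ∃ C > (0:ℝ), ∃ δ > (0:ℝ), ∀ t : ℝ, 0 ≤ t → t < δ →
      |R t - (t + RN * t ^ N)| ≤ C * t ^ (N + 1)) :
    ∀ ν μ : ℝ, 0 < ν → ν < ((N:ℝ) - 1) * |RN| → ((N:ℝ) - 1) * |RN| < μ →
      ∃ ρ : ℝ, 0 < ρ ∧ ρ ≤ ρ₀ ∧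
        (∀ j : ℕ, 1 ≤ j → ∀ t ∈ Ioo (0:ℝ) ρ,
          t / (1 + (j:ℝ) * μ * t ^ (N - 1)) ^ ((1:ℝ) / ((N:ℝ) - 1)) < R^[j] t ∧
          R^[j] t < t / (1 + (j:ℝ) * ν * t ^ (N - 1)) ^ ((1:ℝ) / ((N:ℝ) - 1))) ∧
        MapsTo R (Ioo 0 ρ) (Ioo 0 ρ) :=
  stmt_14_general N hN ρ₀ hρ₀ R RN hRN hRexp
end

section
/- Let N ≥ 2 be an integer and let R : [0,ρ₀) → ℝ be a differentiable map with R(t) = t + R_N·t^N + O(t^{N+1}), R_N < 0, whose derivative satisfies DR(t) = 1 + N·R_N·t^{N−1} + O(t^N). For any real numbers ν, μ with 0 < ν < (N−1)·|R_N| < μ, set κ := ν/μ. Then there exists ρ ∈ (0,ρ₀] such that for every j ∈ ℕ and every t ∈ (0,ρ): DR^j(t) ≤ 1/(1 + j·μ·t^{N−1})^{κN/(N−1)}, where R^j denotes the j-th iterate of R and DR^j its derivative. -/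
/-!
Write `m = N - 1`, `s_j = R^j(t)` and `x_j = t^(-m) + j μ`. Since `m |R_N| < μ`, the expansion of
`R` gives `0 < R(s) ≤ s` and `R(s)^(-m) ≤ s^(-m) + μ` for small `s`, hence `s_j^(-m) ≤ x_j`.
With `c = κN/(N-1)` we have `c μ = νN/(N-1) < N |R_N|`, so the expansion of `DR` gives
`0 ≤ DR(s) ≤ 1 - c μ s^m`. Therefore `DR(s_j) ≤ 1 - c μ / x_j ≤ (x_j / x_{j+1})^c`, and by the
chain rule the product telescopes to `DR^j(t) ≤ (x_0 / x_j)^c = (1 + j μ t^m)^(-c)`.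
-/

open Set Filter Topology Asymptotics

theorem one_sub_mul_div_le_div_add_rpow {x μ c : ℝ} (hx : 0 < x) (hμ : 0 ≤ μ) (hc : 0 ≤ c) :
    1 - c * μ / x ≤ (x / (x + μ)) ^ c := by
  have hexp : Real.exp (-(μ / x)) ≤ x / (x + μ) := by
    rw [Real.exp_neg, show x / (x + μ) = (1 + μ / x)⁻¹ by field_simp]
    exact inv_anti₀ (by positivity) (by linarith [Real.add_one_le_exp (μ / x)])
  calc 1 - c * μ / x ≤ Real.exp (-(c * μ / x)) := by
        linarith [Real.add_one_le_exp (-(c * μ / x))]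
    _ = Real.exp (-(μ / x)) ^ c := by rw [← Real.exp_mul]; ring_nf
    _ ≤ (x / (x + μ)) ^ c := Real.rpow_le_rpow (Real.exp_nonneg _) hexp hc

theorem inv_pow_iterate_le {f : ℝ → ℝ} {m : ℕ} {ρ μ : ℝ} (hmaps : MapsTo f (Ioo 0 ρ) (Ioo 0 ρ))
    (hinv : ∀ s ∈ Ioo 0 ρ, (f s ^ m)⁻¹ ≤ (s ^ m)⁻¹ + μ) {t : ℝ} (ht : t ∈ Ioo 0 ρ) (j : ℕ) :
    (f^[j] t ^ m)⁻¹ ≤ (t ^ m)⁻¹ + j * μ := by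
  induction j with
  | zero => simp
  | succ j ih =>
    rw [Function.iterate_succ_apply']
    push_cast
    linarith [hinv _ (hmaps.iterate j ht)]

theorem deriv_iterate_le_one_div_rpow {f : ℝ → ℝ} {m : ℕ} {ρ μ c : ℝ} (hμ : 0 ≤ μ) (hc : 0 ≤ c)
    (hmaps : MapsTo f (Ioo 0 ρ) (Ioo 0 ρ)) (hdiff : ∀ s ∈ Ioo 0 ρ, DifferentiableAt ℝ f s)
    (hinv : ∀ s ∈ Ioo 0 ρ, (f s ^ m)⁻¹ ≤ (s ^ m)⁻¹ + μ)
    (hderiv : ∀ s ∈ Ioo 0 ρ, 0 ≤ deriv f s ∧ deriv f s ≤ 1 - c * μ * s ^ m)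
    (j : ℕ) {t : ℝ} (ht : t ∈ Ioo 0 ρ) :
    deriv f^[j] t ≤ 1 / (1 + j * μ * t ^ m) ^ c := by
  set x : ℕ → ℝ := fun j ↦ (t ^ m)⁻¹ + j * μ with hx
  have hx0 : ∀ j, 0 < x j := fun j ↦ by have := ht.1; positivity
  have hstep : ∀ j, deriv f (f^[j] t) ≤ (x j / x (j + 1)) ^ c := by
    intro j
    have hs := hmaps.iterate j ht
    have hSx : (x j)⁻¹ ≤ f^[j] t ^ m :=
      (inv_le_comm₀ (pow_pos hs.1 m) (hx0 j)).1 (inv_pow_iterate_le hmaps hinv ht j)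
    calc deriv f (f^[j] t) ≤ 1 - c * μ * f^[j] t ^ m := (hderiv _ hs).2
      _ ≤ 1 - c * μ / x j := by
        rw [div_eq_mul_inv]
        linarith [mul_le_mul_of_nonneg_left hSx (mul_nonneg hc hμ)]
      _ ≤ (x j / (x j + μ)) ^ c := one_sub_mul_div_le_div_add_rpow (hx0 j) hμ hc
      _ = (x j / x (j + 1)) ^ c := by simp only [hx]; push_cast; ring_nf
  have hiterate : ∀ j, DifferentiableAt ℝ f^[j] t ∧ 0 ≤ deriv f^[j] t ∧
      deriv f^[j] t ≤ (x 0 / x j) ^ c := by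
    intro j
    induction j with
    | zero => simp [div_self (hx0 0).ne']
    | succ j ih =>
      obtain ⟨hdj, hpos, hle⟩ := ih
      have hs := hmaps.iterate j ht
      have hdf := hdiff _ hs
      have hchain : deriv f^[j + 1] t = deriv f (f^[j] t) * deriv f^[j] t := by
        rw [Function.iterate_succ', deriv_comp t hdf hdj]
      refine ⟨?_, ?_, ?_⟩
      · rw [Function.iterate_succ']; exact hdf.comp t hdj
      · rw [hchain]; exact mul_nonneg (hderiv _ hs).1 hpos
      · have := hx0 j; have := hx0 (j + 1); have := hx0 0
        calc deriv f^[j + 1] t = deriv f (f^[j] t) * deriv f^[j] t := hchain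
          _ ≤ (x j / x (j + 1)) ^ c * (x 0 / x j) ^ c :=
            mul_le_mul (hstep j) hle hpos (by positivity)
          _ = (x 0 / x (j + 1)) ^ c := by
            rw [← Real.mul_rpow (by positivity) (by positivity)]
            field_simp
  have hratio : x 0 / x j = 1 / (1 + j * μ * t ^ m) := by
    have := pow_pos ht.1 m
    simp only [hx]; field_simp; ring
  calc deriv f^[j] t ≤ (x 0 / x j) ^ c := (hiterate j).2.2
    _ = 1 / (1 + j * μ * t ^ m) ^ c := by
      have := pow_pos ht.1 m
      rw [hratio, Real.div_rpow zero_le_one (by positivity), Real.one_rpow]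

theorem isLittleO_nhdsGT_zero_of_abs_le_pow_succ {f : ℝ → ℝ} {k : ℕ} {C δ : ℝ} (hδ : 0 < δ)
    (h : ∀ t, 0 < t → t < δ → |f t| ≤ C * t ^ (k + 1)) :
    f =o[𝓝[>] 0] fun t ↦ t ^ k := by
  have hO : f =O[𝓝[>] 0] fun t ↦ t ^ (k + 1) := by
    refine IsBigO.of_bound C ?_
    filter_upwards [Ioo_mem_nhdsGT hδ] with t ht
    rw [Real.norm_eq_abs, Real.norm_of_nonneg (pow_nonneg ht.1.le _)]
    exact h t ht.1 ht.2
  exact hO.trans_isLittleO ((isLittleO_pow_pow (lt_add_one k)).mono nhdsWithin_le_nhds)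

theorem tendsto_pow_nhdsGT_zero {m : ℕ} (hm : m ≠ 0) :
    Tendsto (fun s : ℝ ↦ s ^ m) (𝓝[>] 0) (𝓝 0) := by
  simpa [zero_pow hm] using ((continuous_pow m).tendsto (0 : ℝ)).mono_left nhdsWithin_le_nhds

theorem inv_pow_le_inv_pow_add {m : ℕ} {s r b μ : ℝ} (hs : 0 < s) (hμ : 0 ≤ μ)
    (hbS : b * s ^ m < 1) (hr : s * (1 - b * s ^ m) ≤ r) (hsmall : m * b * (1 + μ * s ^ m) ≤ μ) :
    (r ^ m)⁻¹ ≤ (s ^ m)⁻¹ + μ := by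
  set S := s ^ m with hS_def
  have hS : 0 < S := pow_pos hs m
  have hbern : 1 - m * b * S ≤ (1 - b * S) ^ m := by
    simpa [sub_eq_add_neg, mul_neg, mul_assoc] using
      one_add_mul_le_pow (a := -(b * S)) (by linarith) m
  have h1bS : 0 < 1 - b * S := by linarith
  have hrm : S * (1 - b * S) ^ m ≤ r ^ m := by
    rw [hS_def, ← mul_pow]; exact pow_le_pow_left₀ (mul_nonneg hs.le h1bS.le) hr m
  have hμS : 0 ≤ 1 + μ * S := by positivity
  have hprod : S ≤ r ^ m * (1 + μ * S) := calc
    S ≤ S * ((1 - m * b * S) * (1 + μ * S)) := by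
      nlinarith [mul_nonneg (mul_nonneg hS.le hS.le) (sub_nonneg.2 hsmall)]
    _ ≤ S * ((1 - b * S) ^ m * (1 + μ * S)) := by gcongr
    _ ≤ r ^ m * (1 + μ * S) := by rw [← mul_assoc]; gcongr
  have hr0 : 0 < r ^ m := (mul_pos hS (pow_pos h1bS m)).trans_le hrm
  rw [inv_eq_one_div, inv_eq_one_div, div_add' _ _ _ hS.ne', div_le_div_iff₀ hr0 hS]
  linarith

theorem eventually_pos_and_le_self_and_inv_pow_le {R : ℝ → ℝ} {m : ℕ} {RN μ : ℝ} (hm : m ≠ 0)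
    (hRN : RN < 0) (hμ : m * |RN| < μ)
    (hR : (fun s ↦ R s - (s + RN * s ^ (m + 1))) =o[𝓝[>] 0] fun s ↦ s ^ (m + 1)) :
    ∀ᶠ s in 𝓝[>] 0, 0 < R s ∧ R s ≤ s ∧ (R s ^ m)⁻¹ ≤ (s ^ m)⁻¹ + μ := by
  rw [abs_of_neg hRN] at hμ
  have hμ0 : 0 ≤ μ := by linarith [mul_nonneg (Nat.cast_nonneg m) (by linarith : 0 ≤ -RN)]
  set ε := min (-RN) ((μ - m * -RN) / (m + 1)) with hε_def
  have hε : 0 < ε := lt_min (by linarith) (div_pos (by linarith) (by positivity))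
  have hεRN : ε ≤ -RN := min_le_left _ _
  have hb : m * (-RN + ε) < μ := by
    have h1 : ε * (m + 1) ≤ μ - m * -RN :=
      (le_div_iff₀ (by positivity : (0:ℝ) < m + 1)).1 (min_le_right _ _)
    nlinarith
  have hS := tendsto_pow_nhdsGT_zero (m := m) hm
  have hbS : ∀ᶠ s in 𝓝[>] 0, (-RN + ε) * s ^ m < 1 :=
    (hS.const_mul _).eventually_lt_const (by simp)
  have hsmall : ∀ᶠ s in 𝓝[>] 0, m * (-RN + ε) * (1 + μ * s ^ m) < μ :=
    (((hS.const_mul μ).const_add 1).const_mul _).eventually_lt_const (by simpa using hb)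
  filter_upwards [self_mem_nhdsWithin, hR.def hε, hbS, hsmall] with s (hs : 0 < s) herr hbs hsm
  rw [Real.norm_eq_abs, Real.norm_of_nonneg (pow_nonneg (le_of_lt hs) _), abs_le, pow_succ] at herr
  have hsS : 0 ≤ s ^ m * s := by positivity
  have hlow : s * (1 - (-RN + ε) * s ^ m) ≤ R s := by nlinarith [herr.1]
  have hup : R s ≤ s := by nlinarith [herr.2, mul_le_mul_of_nonneg_right hεRN hsS]
  exact ⟨(mul_pos hs (by linarith)).trans_le hlow, hup,
    inv_pow_le_inv_pow_add hs hμ0 hbs hlow hsm.le⟩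

theorem eventually_deriv_nonneg_and_le {R : ℝ → ℝ} {m : ℕ} {RN ν : ℝ} (hm : m ≠ 0)
    (hRN : RN < 0) (hν : ν < (m + 1) * |RN|)
    (hDR : (fun s ↦ deriv R s - (1 + (m + 1) * RN * s ^ m)) =o[𝓝[>] 0] fun s ↦ s ^ m) :
    ∀ᶠ s in 𝓝[>] 0, 0 ≤ deriv R s ∧ deriv R s ≤ 1 - ν * s ^ m := by
  rw [abs_of_neg hRN] at hν
  have hS := tendsto_pow_nhdsGT_zero (m := m) hm
  have hlim : Tendsto (deriv R) (𝓝[>] 0) (𝓝 1) := by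
    simpa using (hDR.trans_tendsto hS).add ((hS.const_mul ((m + 1) * RN)).const_add 1)
  filter_upwards [self_mem_nhdsWithin, hDR.def (sub_pos.2 hν), hlim.eventually_const_lt one_pos]
    with s hs herr hpos
  rw [Real.norm_eq_abs, Real.norm_of_nonneg (pow_nonneg (le_of_lt hs) _), abs_le] at herr
  exact ⟨hpos.le, by linarith [herr.2]⟩

/-- Lemma 5.2: estimates for the derivatives of the iterates of a real map
`R(t) = t + R_N t^N + O(t^{N+1})`, `R_N < 0`, with
`R'(t) = 1 + N R_N t^{N-1} + O(t^N)`. -/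
theorem stmt_15
    (N : ℕ) (hN : 2 ≤ N) (ρ₀ : ℝ) (hρ₀ : 0 < ρ₀)
    (R : ℝ → ℝ) (hdiff : DifferentiableOn ℝ R (Ico 0 ρ₀))
    (RN : ℝ) (hRN : RN < 0)
    (hRexp : ∃ C > (0:ℝ), ∃ δ > (0:ℝ), ∀ t : ℝ, 0 ≤ t → t < δ →
      |R t - (t + RN * t ^ N)| ≤ C * t ^ (N + 1))
    (hDRexp : ∃ C > (0:ℝ), ∃ δ > (0:ℝ), ∀ t : ℝ, 0 < t → t < δ →
      |deriv R t - (1 + (N:ℝ) * RN * t ^ (N - 1))| ≤ C * t ^ N)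
    (ν μ : ℝ) (hν0 : 0 < ν) (hν : ν < ((N:ℝ) - 1) * |RN|)
    (hμ : ((N:ℝ) - 1) * |RN| < μ) :
    ∃ ρ : ℝ, 0 < ρ ∧ ρ ≤ ρ₀ ∧
      ∀ j : ℕ, ∀ t ∈ Ioo (0:ℝ) ρ,
        deriv (R^[j]) t ≤
          1 / (1 + (j:ℝ) * μ * t ^ (N - 1)) ^ ((ν / μ) * (N:ℝ) / ((N:ℝ) - 1)) := by
  obtain ⟨m, rfl⟩ : ∃ m, N = m + 1 := ⟨N - 1, by omega⟩
  have hm : m ≠ 0 := by omega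
  obtain ⟨_, -, δ₁, hδ₁, hR⟩ := hRexp
  obtain ⟨_, -, δ₂, hδ₂, hDR⟩ := hDRexp
  simp only [Nat.add_sub_cancel, Nat.cast_add, Nat.cast_one, add_sub_cancel_right] at hDR hν hμ ⊢
  have hμ0 : 0 < μ := by linarith
  have hcμ : ν / μ * (m + 1) / m * μ < (m + 1) * |RN| := by
    have hm0 : (0 : ℝ) < m := by positivity
    rw [show ν / μ * (m + 1) / m * μ = ν / m * (m + 1) by field_simp, div_mul_eq_mul_div,
      div_lt_iff₀ hm0]
    nlinarith
  obtain ⟨ρ, hρ, hsub⟩ := mem_nhdsGT_iff_exists_Ioo_subset.1 <|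
    (eventually_pos_and_le_self_and_inv_pow_le hm hRN hμ
      (isLittleO_nhdsGT_zero_of_abs_le_pow_succ hδ₁ fun t ht ↦ hR t ht.le)).and
    (eventually_deriv_nonneg_and_le hm hRN hcμ
      (isLittleO_nhdsGT_zero_of_abs_le_pow_succ hδ₂ hDR))
  have hsub' : Ioo 0 (min ρ ρ₀) ⊆ Ioo 0 ρ := Ioo_subset_Ioo_right (min_le_left _ _)
  refine ⟨min ρ ρ₀, lt_min hρ hρ₀, min_le_right _ _, fun j t ht ↦
    deriv_iterate_le_one_div_rpow hμ0.le (by positivity) ?_ ?_ ?_ ?_ j ht⟩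
  · exact fun s hs ↦ ⟨(hsub (hsub' hs)).1.1, (hsub (hsub' hs)).1.2.1.trans_lt hs.2⟩
  · exact fun s hs ↦ hdiff.differentiableAt
      (Ico_mem_nhds hs.1 (hs.2.trans_le (min_le_right _ _)))
  · exact fun s hs ↦ (hsub (hsub' hs)).1.2.2
  · exact fun s hs ↦ (hsub (hsub' hs)).2
end

section
/- Let Σ and DΣ be metric spaces with DΣ complete, and let Γ : Σ × DΣ → Σ × DΣ be a map of the form Γ(γ,φ) = (G(γ), H(γ,φ)). Assume: (a) G has an attracting fixed point γ∞ ∈ Σ, i.e. G(γ∞) = γ∞ and for every γ ∈ Σ the iterates Gⁿ(γ) converge to γ∞; (b) H is uniformly contractive in the second variable, i.e. there is λ ∈ [0,1) with d(H(γ,φ), H(γ,ψ)) ≤ λ·d(φ,ψ) for all γ ∈ Σ and all φ, ψ ∈ DΣ; let φ∞ ∈ DΣ be the unique fixed point of H(γ∞,·); and (c) the map γ ↦ H(γ,φ∞) is continuous at γ∞. Then (γ∞, φ∞) is an attracting fixed point of Γ: Γ(γ∞,φ∞) = (γ∞,φ∞) and for every (γ,φ) ∈ Σ × DΣ the iterates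 Γⁿ(γ,φ) converge to (γ∞,φ∞). -/
/-!
The base coordinate converges to `γ₀` by assumption. In the fibre, the distance `dₙ` of the
`n`-th iterate to `φ₀` satisfies `dₙ₊₁ ≤ λ dₙ + εₙ` with `εₙ = d(H(γₙ, φ₀), φ₀)`, by the triangle
inequality through `H(γₙ, φ₀)`; continuity at `γ₀` makes `εₙ → 0`, and a contracting recursion with
vanishing forcing term tends to `0`.
-/

open Filter Topology

lemma sub_le_pow_mul_sub_of_le_mul_add {d : ℕ → ℝ} {lam c : ℝ} (hlam : 0 ≤ lam)
    (hrec : ∀ n, d (n + 1) ≤ lam * d n + (1 - lam) * c) (n : ℕ) :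
    d n - c ≤ lam ^ n * (d 0 - c) := by
  induction n with
  | zero => simp
  | succ n ih =>
    calc d (n + 1) - c ≤ lam * (d n - c) := by linarith [hrec n]
      _ ≤ lam * (lam ^ n * (d 0 - c)) := by gcongr
      _ = lam ^ (n + 1) * (d 0 - c) := by ring

lemma tendsto_zero_of_le_mul_add {d ε : ℕ → ℝ} {lam : ℝ} (hd : ∀ n, 0 ≤ d n) (hlam : lam < 1)
    (hrec : ∀ n, d (n + 1) ≤ lam * d n + ε n) (hε : Tendsto ε atTop (𝓝 0)) :
    Tendsto d atTop (𝓝 0) := by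
  wlog hlam0 : 0 ≤ lam generalizing lam
  · refine this (max_lt hlam one_pos) (fun n => (hrec n).trans ?_) (le_max_right _ _)
    gcongr
    exacts [hd n, le_max_left _ _]
  refine tendsto_order.2 ⟨fun a ha => .of_forall fun n => ha.trans_le (hd n), fun δ hδ => ?_⟩
  set c := δ / 2
  have hc : 0 < (1 - lam) * c := mul_pos (by linarith) (by positivity)
  obtain ⟨N, hN⟩ := eventually_atTop.1 (hε.eventually (ge_mem_nhds hc))
  have hbound (k : ℕ) : d (k + N) - c ≤ lam ^ k * (d (0 + N) - c) := by
    refine sub_le_pow_mul_sub_of_le_mul_add (d := fun k => d (k + N)) hlam0 (fun k => ?_) k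
    rw [add_right_comm]
    exact (hrec _).trans (by gcongr; exact hN _ (by omega))
  have hlim : Tendsto (fun k => lam ^ k * (d (0 + N) - c) + c) atTop (𝓝 c) := by
    simpa using ((tendsto_pow_atTop_nhds_zero_of_lt_one hlam0 hlam).mul_const _).add_const c
  rw [← map_add_atTop_eq_nat N, eventually_map]
  filter_upwards [hlim.eventually (gt_mem_nhds (half_lt_self hδ))] with k hk
  linarith [hbound k]

theorem tendsto_of_fiber_contraction {X Y : Type*} [TopologicalSpace X] [PseudoMetricSpace Y]
    {H : X → Y → Y} {lam : ℝ} (hlam : lam < 1)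
    (hcontr : ∀ (γ : X) (φ ψ : Y), dist (H γ φ) (H γ ψ) ≤ lam * dist φ ψ)
    {γ₀ : X} {φ₀ : Y} (hφ₀ : H γ₀ φ₀ = φ₀) (hcont : ContinuousAt (fun γ => H γ φ₀) γ₀)
    {γ : ℕ → X} {φ : ℕ → Y} (hγ : Tendsto γ atTop (𝓝 γ₀))
    (hφ : ∀ n, φ (n + 1) = H (γ n) (φ n)) :
    Tendsto φ atTop (𝓝 φ₀) := by
  rw [tendsto_iff_dist_tendsto_zero]
  refine tendsto_zero_of_le_mul_add (ε := fun n => dist (H (γ n) φ₀) φ₀) (fun n => dist_nonneg)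
    hlam (fun n => ?_) ?_
  · calc dist (φ (n + 1)) φ₀ = dist (H (γ n) (φ n)) φ₀ := by rw [hφ]
      _ ≤ dist (H (γ n) (φ n)) (H (γ n) φ₀) + dist (H (γ n) φ₀) φ₀ := dist_triangle _ _ _
      _ ≤ lam * dist (φ n) φ₀ + dist (H (γ n) φ₀) φ₀ := by gcongr; exact hcontr _ _ _
  · rw [← tendsto_iff_dist_tendsto_zero]
    have h := hcont.tendsto.comp hγ
    rwa [hφ₀] at h

theorem stmt_17_general
    {X Y : Type*} [MetricSpace X] [MetricSpace Y]
    (G : X → X) (H : X → Y → Y)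
    (Γ : X × Y → X × Y) (hΓ : ∀ p : X × Y, Γ p = (G p.1, H p.1 p.2))
    (γ₀ : X) (hGfix : G γ₀ = γ₀)
    (hGattr : ∀ γ : X, Tendsto (fun n => G^[n] γ) atTop (nhds γ₀))
    (lam : ℝ) (hlam1 : lam < 1)
    (hcontr : ∀ (γ : X) (φ ψ : Y), dist (H γ φ) (H γ ψ) ≤ lam * dist φ ψ)
    (φ₀ : Y) (hφfix : H γ₀ φ₀ = φ₀)
    (hcont : ContinuousAt (fun γ => H γ φ₀) γ₀) :
    Γ (γ₀, φ₀) = (γ₀, φ₀) ∧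
    ∀ p : X × Y, Tendsto (fun n => Γ^[n] p) atTop (nhds (γ₀, φ₀)) := by
  have hfst (n : ℕ) (p : X × Y) : (Γ^[n] p).1 = G^[n] p.1 :=
    Function.Semiconj.iterate_right (fun p => by rw [hΓ]) n p
  refine ⟨by simp only [hΓ, hGfix, hφfix], fun p => ?_⟩
  have hbase : Tendsto (fun n => (Γ^[n] p).1) atTop (𝓝 γ₀) := by
    simpa only [hfst] using hGattr p.1
  have hfiber : Tendsto (fun n => (Γ^[n] p).2) atTop (𝓝 φ₀) :=
    tendsto_of_fiber_contraction hlam1 hcontr hφfix hcont hbase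
      (fun n => by rw [Function.iterate_succ_apply', hΓ])
  exact hbase.prodMk_nhds hfiber

/-- The fiber contraction theorem: if `G` has an attracting fixed point `γ∞`,
`H` is uniformly contractive in the second variable with `φ∞` the fixed point
of `H(γ∞, ·)`, and `γ ↦ H(γ, φ∞)` is continuous at `γ∞`, then `(γ∞, φ∞)` is an
attracting fixed point of `Γ(γ, φ) = (G γ, H γ φ)`. -/
theorem stmt_17
    {X Y : Type*} [MetricSpace X] [MetricSpace Y] [CompleteSpace Y]
    (G : X → X) (H : X → Y → Y)
    (Γ : X × Y → X × Y) (hΓ : ∀ p : X × Y, Γ p = (G p.1, H p.1 p.2))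
    (γ₀ : X) (hGfix : G γ₀ = γ₀)
    (hGattr : ∀ γ : X, Tendsto (fun n => G^[n] γ) atTop (nhds γ₀))
    (lam : ℝ) (hlam0 : 0 ≤ lam) (hlam1 : lam < 1)
    (hcontr : ∀ (γ : X) (φ ψ : Y), dist (H γ φ) (H γ ψ) ≤ lam * dist φ ψ)
    (φ₀ : Y) (hφfix : H γ₀ φ₀ = φ₀)
    (hcont : ContinuousAt (fun γ => H γ φ₀) γ₀) :
    Γ (γ₀, φ₀) = (γ₀, φ₀) ∧
    ∀ p : X × Y, Tendsto (fun n => Γ^[n] p) atTop (nhds (γ₀, φ₀)) :=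
  stmt_17_general G H Γ hΓ γ₀ hGfix hGattr lam hlam1 hcontr φ₀ hφfix hcont
end
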